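/- Let w : Z^d → ℝ be a positive supersolution of (H_V - λ)ψ = 0 in Z^d_{≥N} and let φ : Z^d → ℝ be finitely supported with φ_n = 0 whenever N-1 ≤ |n| < N+1. Then Σ_{|n|≥N} Σ_{j=1}^d [D_j(wφ)]_n² + Σ_{|n|≥N} (V_n - λ) w_n² φ_n² ≥ Σ_{|n|≥N} Σ_{j=1}^d w_n w_{n-δ_j} (D_j φ)_n². -/

import Mathlib

open scoped BigOperators

noncomputable section

/-- Euclidean norm of a lattice point in `ℤ^d`. -/
def znorm {d : ℕ} (v : Fin d → ℤ) : ℝ := Real.sqrt (∑ j, ((v j : ℝ))^2)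

/-- The discrete Laplacian `(-Δψ)_n = Σ_{|m-n|=1} (ψ_n - ψ_m)`. -/
def negLap {d : ℕ} (ψ : (Fin d → ℤ) → ℝ) (n : Fin d → ℤ) : ℝ :=
  ∑ᶠ (m : Fin d → ℤ) (_ : znorm (m - n) = 1), (ψ n - ψ m)

/-- The partial difference operator `(D_j ψ)_n = ψ_n - ψ_{n-δ_j}`. -/
def Dop {d : ℕ} (j : Fin d) (ψ : (Fin d → ℤ) → ℝ) (n : Fin d → ℤ) : ℝ :=
  ψ n - ψ (n - Pi.single j 1)


/-!
For finitely supported `ψ`, the pointwise identity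
`(D_j(wψ))_n² = w_n w_{n-δ_j} (D_jψ)_n² + (D_j w)_n (D_j(wψ²))_n`
and summation by parts, `Σ_n Σ_j (D_j w)_n (D_j g)_n = Σ_n (-Δw)_n g_n`, give the ground
state representation
`Σ_n Σ_j (D_j(wψ))_n² = Σ_n Σ_j w_n w_{n-δ_j} (D_jψ)_n² + Σ_n (-Δw)_n w_n ψ_n²`.
Adding `Σ_n (V_n - λ) w_n² ψ_n²` turns the last sum into `Σ_n [(H_V - λ)w]_n w_n ψ_n²`,
which is `≥ 0` since `ψ` lives where `w` is a supersolution. Take `ψ = φ · 1_{|n| ≥ N}`: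
as `|n - δ_j|` and `|n|` differ by at most `1` and `φ` vanishes on `N - 1 ≤ |n| < N + 1`,
the terms with `|n| ≥ N` are those of `φ` and all others vanish.
-/

open Function

theorem Int.sum_sq_eq_one_iff {ι : Type*} [Fintype ι] [DecidableEq ι] (v : ι → ℤ) :
    ∑ i, v i ^ 2 = 1 ↔ ∃ j, v = Pi.single j 1 ∨ v = -Pi.single j 1 := by
  constructor
  · intro h
    obtain ⟨j, hj⟩ : ∃ j, v j ≠ 0 := by
      by_contra! h0
      simp [h0] at h
    have hsplit : v j ^ 2 + ∑ i ∈ Finset.univ.erase j, v i ^ 2 = 1 := by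
      rwa [Finset.add_sum_erase _ (fun i => v i ^ 2) (Finset.mem_univ j)]
    have hrest_nonneg : 0 ≤ ∑ i ∈ Finset.univ.erase j, v i ^ 2 :=
      Finset.sum_nonneg fun i _ => sq_nonneg (v i)
    have hj_one : 1 ≤ v j ^ 2 := (one_le_sq_iff_one_le_abs _).2 (Int.one_le_abs hj)
    have hrest : ∀ i ∈ Finset.univ.erase j, v i ^ 2 = 0 :=
      (Finset.sum_eq_zero_iff_of_nonneg fun i _ => sq_nonneg (v i)).1 (by linarith)
    have hv : v = Pi.single j (v j) := by
      ext i
      rcases eq_or_ne i j with rfl | hij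
      · simp
      · simpa [hij] using hrest i (by simp [hij])
    refine ⟨j, ?_⟩
    rcases sq_eq_one_iff.1 (show v j ^ 2 = 1 by linarith) with h1 | h1
    · exact Or.inl (by rw [hv, h1])
    · exact Or.inr (by rw [hv, h1, Pi.single_neg])
  · rintro ⟨j, rfl | rfl⟩ <;> simp [Pi.single_apply]

theorem finsum_mul_sub_shift {G : Type*} [AddCommGroup G] (a g : G → ℝ) (c : G)
    (hg : HasFiniteSupport g) :
    ∑ᶠ n, a n * (g n - g (n - c)) = ∑ᶠ n, (a n - a (n + c)) * g n := by
  have hshift : HasFiniteSupport fun n => g (n - c) :=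
    hg.fun_comp_of_injective (sub_left_injective (b := c))
  have hreindex : ∑ᶠ n, a n * g (n - c) = ∑ᶠ n, a (n + c) * g n := by
    simpa using finsum_comp_equiv (Equiv.subRight c) (f := fun n => a (n + c) * g n)
  calc ∑ᶠ n, a n * (g n - g (n - c))
      = ∑ᶠ n, a n * g n - ∑ᶠ n, a n * g (n - c) := by
        simp_rw [mul_sub]
        exact finsum_sub_distrib (hg.fun_mul_right a) (hshift.fun_mul_right a)
    _ = ∑ᶠ n, a n * g n - ∑ᶠ n, a (n + c) * g n := by rw [hreindex]
    _ = ∑ᶠ n, (a n - a (n + c)) * g n := by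
        simp_rw [sub_mul]
        exact (finsum_sub_distrib (hg.fun_mul_right a) (hg.fun_mul_right _)).symm

section Lattice

variable {d : ℕ}

theorem znorm_eq_one_iff {v : Fin d → ℤ} :
    znorm v = 1 ↔ ∃ j, v = Pi.single j 1 ∨ v = -Pi.single j 1 := by
  rw [znorm, Real.sqrt_eq_one, ← Int.sum_sq_eq_one_iff]
  exact_mod_cast Iff.rfl

theorem znorm_single (j : Fin d) : znorm (Pi.single j 1 : Fin d → ℤ) = 1 :=
  znorm_eq_one_iff.2 ⟨j, Or.inl rfl⟩

theorem znorm_eq_norm (v : Fin d → ℤ) :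
    znorm v = ‖WithLp.toLp 2 (fun i => (v i : ℝ))‖ := by
  simp [znorm, EuclideanSpace.norm_eq]

theorem abs_znorm_sub_znorm_le (a b : Fin d → ℤ) : |znorm a - znorm b| ≤ znorm (a - b) := by
  simp only [znorm_eq_norm, Pi.sub_apply, Int.cast_sub]
  exact abs_norm_sub_norm_le _ _

theorem abs_znorm_sub_single_sub_le (n : Fin d → ℤ) (j : Fin d) :
    |znorm (n - Pi.single j 1) - znorm n| ≤ 1 := by
  have h := abs_znorm_sub_znorm_le n (n - Pi.single j 1)
  rwa [sub_sub_cancel, znorm_single, abs_sub_comm] at h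

theorem setOf_znorm_sub_eq_one (n : Fin d → ℤ) :
    {m | znorm (m - n) = 1} =
      Set.range (fun j => n - Pi.single j 1) ∪ Set.range (fun j => n + Pi.single j 1) := by
  ext m
  simp only [Set.mem_ofPred_eq, znorm_eq_one_iff, Set.mem_union, Set.mem_range]
  constructor
  · rintro ⟨j, h | h⟩
    · exact Or.inr ⟨j, by rw [← h]; abel⟩
    · exact Or.inl ⟨j, by rw [sub_eq_iff_eq_add.1 h]; abel⟩
  · rintro (⟨j, rfl⟩ | ⟨j, rfl⟩)
    · exact ⟨j, Or.inr (by abel)⟩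
    · exact ⟨j, Or.inl (by abel)⟩

theorem injective_single_one : Injective fun j : Fin d => (Pi.single j 1 : Fin d → ℤ) := by
  intro j k h
  by_contra hjk
  simpa [hjk] using congrFun h j

theorem negLap_eq_sum_Dop (ψ : (Fin d → ℤ) → ℝ) (n : Fin d → ℤ) :
    negLap ψ n = ∑ j, (Dop j ψ n - Dop j ψ (n + Pi.single j 1)) := by
  have hdisj : Disjoint (Set.range fun j => n - Pi.single j 1)
      (Set.range fun j => n + Pi.single j 1) := by
    rw [Set.disjoint_right]
    rintro _ ⟨j, rfl⟩ ⟨k, h⟩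
    have := congrFun h k
    simp only [Pi.sub_apply, Pi.add_apply, Pi.single_apply] at this
    split_ifs at this <;> omega
  change ∑ᶠ m ∈ {m | znorm (m - n) = 1}, (ψ n - ψ m) = _
  rw [setOf_znorm_sub_eq_one, finsum_mem_union hdisj (Set.finite_range _) (Set.finite_range _),
    finsum_mem_range (g := fun j => n - Pi.single j 1)
      (sub_right_injective.comp injective_single_one),
    finsum_mem_range (g := fun j => n + Pi.single j 1)
      ((add_right_injective n).comp injective_single_one),
    finsum_eq_sum_of_fintype, finsum_eq_sum_of_fintype, ← Finset.sum_add_distrib]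
  refine Finset.sum_congr rfl fun j _ => ?_
  simp only [Dop, add_sub_cancel_right]
  ring

@[fun_prop]
theorem hasFiniteSupport_Dop (j : Fin d) {ψ : (Fin d → ℤ) → ℝ}
    (hψ : HasFiniteSupport ψ) : HasFiniteSupport (Dop j ψ) :=
  hψ.sub (hψ.comp_of_injective sub_left_injective)

theorem sum_finsum_Dop_mul_Dop (w g : (Fin d → ℤ) → ℝ) (hg : HasFiniteSupport g) :
    ∑ j, ∑ᶠ n, Dop j w n * Dop j g n = ∑ᶠ n, negLap w n * g n := by
  calc ∑ j, ∑ᶠ n, Dop j w n * Dop j g n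
      = ∑ j, ∑ᶠ n, (Dop j w n - Dop j w (n + Pi.single j 1)) * g n :=
        Finset.sum_congr rfl fun j _ => finsum_mul_sub_shift _ g _ hg
    _ = ∑ᶠ n, ∑ j, (Dop j w n - Dop j w (n + Pi.single j 1)) * g n :=
        sum_finsum_comm _ _ fun j _ => hg.fun_mul_right _
    _ = ∑ᶠ n, negLap w n * g n := by simp_rw [negLap_eq_sum_Dop, Finset.sum_mul]

theorem sq_Dop_mul (j : Fin d) (w ψ : (Fin d → ℤ) → ℝ) (n : Fin d → ℤ) :
    Dop j (fun m => w m * ψ m) n ^ 2 =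
      w n * w (n - Pi.single j 1) * Dop j ψ n ^ 2 +
        Dop j w n * Dop j (fun m => w m * ψ m ^ 2) n := by
  simp only [Dop]
  ring

theorem finsum_sum_sq_Dop_mul (w ψ : (Fin d → ℤ) → ℝ) (hψ : HasFiniteSupport ψ) :
    ∑ᶠ n, ∑ j, Dop j (fun m => w m * ψ m) n ^ 2 =
      ∑ᶠ n, ∑ j, w n * w (n - Pi.single j 1) * Dop j ψ n ^ 2 +
        ∑ᶠ n, negLap w n * (w n * ψ n ^ 2) := by
  have hwψ : HasFiniteSupport fun m => w m * ψ m ^ 2 := by fun_prop (disch := simp)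
  rw [finsum_sum_comm _ _ fun j _ => by fun_prop (disch := simp),
    finsum_sum_comm _ _ fun j _ => by fun_prop (disch := simp),
    ← sum_finsum_Dop_mul_Dop w _ hwψ, ← Finset.sum_add_distrib]
  refine Finset.sum_congr rfl fun j _ => ?_
  rw [← finsum_add_distrib (by fun_prop (disch := simp)) (by fun_prop (disch := simp))]
  exact finsum_congr (sq_Dop_mul j w ψ)

theorem finsum_sum_mul_sq_Dop_le_of_supersolution (V : (Fin d → ℤ) → ℝ) (lam : ℝ)
    (w ψ : (Fin d → ℤ) → ℝ)
    (hw_nonneg : ∀ n, 0 ≤ w n) (hψ : HasFiniteSupport ψ)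
    (hw_super : ∀ n ∈ support ψ, 0 ≤ negLap w n + (V n - lam) * w n) :
    ∑ᶠ n, ∑ j, w n * w (n - Pi.single j 1) * Dop j ψ n ^ 2 ≤
      ∑ᶠ n, ∑ j, Dop j (fun m => w m * ψ m) n ^ 2 +
        ∑ᶠ n, (V n - lam) * w n ^ 2 * ψ n ^ 2 := by
  suffices
      0 ≤ ∑ᶠ n, negLap w n * (w n * ψ n ^ 2) + ∑ᶠ n, (V n - lam) * w n ^ 2 * ψ n ^ 2 by
    rw [finsum_sum_sq_Dop_mul w ψ hψ]
    linarith
  rw [← finsum_add_distrib (by fun_prop (disch := simp)) (by fun_prop (disch := simp))]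
  refine finsum_nonneg fun n => ?_
  by_cases hn : ψ n = 0
  · simp [hn]
  calc 0 ≤ (negLap w n + (V n - lam) * w n) * (w n * ψ n ^ 2) :=
        mul_nonneg (hw_super n hn) (mul_nonneg (hw_nonneg n) (sq_nonneg _))
    _ = _ := by ring

theorem indicator_sub_single_eq {N : ℕ} {φ : (Fin d → ℤ) → ℝ}
    (hφ_van : ∀ n : Fin d → ℤ, (N : ℝ) - 1 ≤ znorm n → znorm n < N + 1 → φ n = 0)
    (n : Fin d → ℤ) (j : Fin d) :
    {m | (N : ℝ) ≤ znorm m}.indicator φ (n - Pi.single j 1) =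
      if (N : ℝ) ≤ znorm n then φ (n - Pi.single j 1) else 0 := by
  have hnear := abs_le.1 (abs_znorm_sub_single_sub_le n j)
  simp only [Set.indicator_apply, Set.mem_ofPred_eq]
  split_ifs
  · rfl
  · exact hφ_van _ (by linarith) (by linarith)
  · exact (hφ_van _ (by linarith) (by linarith)).symm
  · rfl

end Lattice

/-- Inequality derived from a positive supersolution `w` of `(H_V - λ)ψ = 0` in
`ℤ^d_{≥N}` tested against a finitely supported `φ` vanishing in the annulus
`N-1 ≤ |n| < N+1`:
`Σ_{|n|≥N} Σ_j [D_j(wφ)]_n² + Σ_{|n|≥N} (V_n - λ) w_n² φ_n²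
  ≥ Σ_{|n|≥N} Σ_j w_n w_{n-δ_j} (D_j φ)_n²`. -/
theorem supersolution_inequality {d : ℕ} (N : ℕ) (V : (Fin d → ℤ) → ℝ) (lam : ℝ)
    (w φ : (Fin d → ℤ) → ℝ)
    (hw_nonneg : ∀ n, 0 ≤ w n)
    (hw_super : ∀ n : Fin d → ℤ, (N : ℝ) ≤ znorm n →
      0 ≤ negLap w n + (V n - lam) * w n)
    (hφ : (Function.support φ).Finite)
    (hφ_van : ∀ n : Fin d → ℤ, (N : ℝ) - 1 ≤ znorm n → znorm n < (N : ℝ) + 1 → φ n = 0) :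
    ∑ᶠ (n : Fin d → ℤ) (_ : (N : ℝ) ≤ znorm n),
        ∑ j : Fin d, w n * w (n - Pi.single j 1) * (Dop j φ n) ^ 2
    ≤ (∑ᶠ (n : Fin d → ℤ) (_ : (N : ℝ) ≤ znorm n),
        ∑ j : Fin d, (Dop j (fun m => w m * φ m) n) ^ 2)
      + (∑ᶠ (n : Fin d → ℤ) (_ : (N : ℝ) ≤ znorm n), (V n - lam) * w n ^ 2 * φ n ^ 2) := by
  set s : Set (Fin d → ℤ) := {n | (N : ℝ) ≤ znorm n}
  have key := finsum_sum_mul_sq_Dop_le_of_supersolution V lam w (s.indicator φ) hw_nonneg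
    (hφ.subset (Set.support_indicator.trans_subset Set.inter_subset_right))
    fun n hn => hw_super n (Set.support_indicator_subset (s := s) hn)
  -- each summand for `s.indicator φ` is `if n ∈ s then (the summand for φ) else 0`
  refine (Eq.le ?_).trans (key.trans_eq (congrArg₂ (· + ·) ?_ ?_)) <;>
    refine finsum_congr fun n => ?_ <;> rw [finsum_eq_if] <;>
    by_cases h : (N : ℝ) ≤ znorm n <;> simp [Dop, indicator_sub_single_eq hφ_van, h, s]
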